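/- For all n ≥ 1, the number of Gessel permutations of size n equals the odd double factorial (2n-1)!! = 1·3·5···(2n-1). -/

import Mathlib

/-- `l` is a permutation (as a sequence) of the multiset `{1,1,2,2,...,n,n}`. -/
def IsDoubleMultiset (n : ℕ) (l : List ℕ) : Prop :=
  ∀ i : ℕ, l.count i = if 1 ≤ i ∧ i ≤ n then 2 else 0

/-- A Stirling permutation of size `n`: a permutation of `{1,1,2,2,...,n,n}`
such that every entry lying strictly between the two (equal) occurrences of a
value exceeds that value. -/
def IsStirlingPerm (n : ℕ) (l : List ℕ) : Prop :=
  IsDoubleMultiset n l ∧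
    ∀ a b c : Fin l.length, a < b → b < c → l.get a = l.get c →
      l.get a < l.get b

/-- A Gessel permutation of size `n`: a permutation of `{1,1,2,2,...,n,n}` in
which the second occurrence of each value is a right-to-left minimum
(equivalently, the second occurrences of `1,2,...,n` appear in that order). -/
def IsGesselPerm (n : ℕ) (l : List ℕ) : Prop :=
  IsDoubleMultiset n l ∧
    ∀ a c d : Fin l.length, a < c → l.get a = l.get c → c < d →
      l.get c < l.get d

/-!
In a Gessel permutation of size `n + 1` nothing can follow the second copy of `n + 1`, since
nothing exceeds it; so it ends in `n + 1`. Deleting both copies of `n + 1` leaves a Gessel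
permutation of size `n`, and conversely, placing a copy of `n + 1` in any of the `2n + 1` gaps
of a Gessel permutation of size `n` and appending another one gives one of size `n + 1`.
Hence the counts satisfy `c (n + 1) = (2n + 1) c n`. Both directions are sublist arguments
once the Gessel condition is read as avoiding subsequences `x x y` with `y ≤ x`.
-/

open List

namespace List

theorem cons_cons_singleton_sublist_iff {α : Type*} {x y z : α} {l : List α} :
    [x, y, z] <+ l ↔ ∃ a b c : Fin l.length, a < b ∧ b < c ∧
      l.get a = x ∧ l.get b = y ∧ l.get c = z := by
  constructor
  · intro h
    obtain ⟨is, his, hlt⟩ := sublist_eq_map_getElem h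
    rcases is with _ | ⟨a, _ | ⟨b, _ | ⟨c, _ | _⟩⟩⟩ <;> simp at his
    simp only [pairwise_cons, mem_cons, forall_eq_or_imp] at hlt
    exact ⟨a, b, c, hlt.1.1, hlt.2.1.1, by simp [his]⟩
  · rintro ⟨a, b, c, hab, hbc, rfl, rfl, rfl⟩
    simpa using map_getElem_sublist (is := [a, b, c]) (by simp [hab, hbc, hab.trans hbc])

theorem exists_eq_append_cons_of_count_eq_one {α : Type*} [BEq α] [LawfulBEq α]
    {a : α} {l : List α} (h : l.count a = 1) :
    ∃ s t, l = s ++ a :: t ∧ a ∉ s ∧ a ∉ t := by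
  obtain ⟨s, t, rfl⟩ := mem_iff_append.1 (count_pos_iff.1 (by omega : 0 < l.count a))
  simp only [count_append, count_cons_self] at h
  exact ⟨s, t, rfl, count_eq_zero.1 (by omega : s.count a = 0),
    count_eq_zero.1 (by omega : t.count a = 0)⟩

theorem Sublist.of_append_singleton {α : Type*} {a b : α} {l₁ l₂ : List α}
    (h : l₁ ++ [a] <+ l₂ ++ [b]) : l₁ <+ l₂ := by
  have h' : a :: l₁.reverse <+ b :: l₂.reverse := by simpa using reverse_sublist.2 h
  simpa using h'.of_cons_cons

end List

def insertPair {α : Type*} (v : α) (l : List α) (p : ℕ) : List α :=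
  l.take p ++ v :: l.drop p ++ [v]

section insertPair

variable {α : Type*} {v : α} {l l' : List α} {p q : ℕ}

theorem perm_insertPair : insertPair v l p ~ v :: v :: l :=
  (perm_append_singleton v _).trans ((perm_middle.trans (by rw [take_append_drop])).cons v)

variable [DecidableEq α]

theorem filter_insertPair (hv : v ∉ l) : (insertPair v l p).filter (· ≠ v) = l := by
  have hl : l.filter (· ≠ v) = l :=
    filter_eq_self.2 fun x hx => by simpa using ne_of_mem_of_not_mem hx hv
  rw [insertPair, filter_append, filter_append, filter_cons_of_neg (by simp),
    filter_cons_of_neg (by simp), filter_nil, append_nil, ← filter_append, take_append_drop, hl]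

theorem idxOf_insertPair (hv : v ∉ l) (hp : p ≤ l.length) : (insertPair v l p).idxOf v = p := by
  rw [insertPair, append_assoc, idxOf_append_of_notMem (fun h => hv (mem_of_mem_take h)),
    cons_append, idxOf_cons_self, length_take]
  omega

theorem insertPair_inj (hv : v ∉ l) (hv' : v ∉ l') (hp : p ≤ l.length) (hq : q ≤ l'.length)
    (h : insertPair v l p = insertPair v l' q) : l = l' ∧ p = q :=
  ⟨by rw [← filter_insertPair (p := p) hv, h, filter_insertPair hv'],
    by rw [← idxOf_insertPair hv hp, h, idxOf_insertPair hv' hq]⟩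

end insertPair

theorem IsDoubleMultiset.length_eq {n : ℕ} {l : List ℕ} (h : IsDoubleMultiset n l) :
    l.length = 2 * n := by
  have hperm : l.Perm (range' 1 n ++ range' 1 n) := by
    refine perm_iff_count.2 fun i => ?_
    have hmem : (∃ k, k < n ∧ i = 1 + 1 * k) ↔ 1 ≤ i ∧ i ≤ n :=
      ⟨by rintro ⟨k, hk, rfl⟩; omega, fun hi => ⟨i - 1, by omega, by omega⟩⟩
    rw [h i, count_append, count_range']
    simp only [hmem]
    split_ifs <;> rfl
  simp [hperm.length_eq, two_mul]

theorem IsDoubleMultiset.le_of_mem {n x : ℕ} {l : List ℕ} (h : IsDoubleMultiset n l)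
    (hx : x ∈ l) : x ≤ n := by
  have hcount := h x
  have hpos := count_pos_iff.2 hx
  split_ifs at hcount <;> omega

def AvoidsPairThenLE (l : List ℕ) : Prop :=
  ∀ x y : ℕ, y ≤ x → ¬ [x, x, y] <+ l

theorem AvoidsPairThenLE.sublist {l l' : List ℕ} (h : AvoidsPairThenLE l) (hl : l' <+ l) :
    AvoidsPairThenLE l' :=
  fun x y hyx hsub => h x y hyx (hsub.trans hl)

theorem avoidsPairThenLE_insertPair {v : ℕ} {l : List ℕ} (h : AvoidsPairThenLE l)
    (hlt : ∀ x ∈ l, x < v) (p : ℕ) : AvoidsPairThenLE (insertPair v l p) := by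
  have hv : v ∉ l := fun hv => (hlt v hv).false
  intro x y hyx hsub
  have hxx : [x, x] <+ l.take p ++ v :: l.drop p :=
    (hsub : [x, x] ++ [y] <+ _).of_append_singleton
  have hxv : x ≠ v := by
    rintro rfl
    have h3 : replicate 3 x <+ insertPair x l p := hxx.append_right [x]
    have h3le := replicate_sublist_iff.1 h3
    rw [perm_insertPair.count_eq] at h3le
    simp [count_eq_zero.2 hv] at h3le
  have hxl : x ∈ l := by
    have hx := perm_insertPair.subset (hsub.subset (mem_cons_self (a := x)))
    simp only [mem_cons] at hx
    tauto
  have hyv : y ≠ v := by have := hlt x hxl; omega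
  have hfilter := hsub.filter (· ≠ v)
  rw [filter_insertPair hv] at hfilter
  exact h x y hyx (by simpa [hxv, hyv] using hfilter)

theorem AvoidsPairThenLE.exists_eq_concat {v : ℕ} {l : List ℕ} (h : AvoidsPairThenLE l)
    (hmax : ∀ x ∈ l, x ≤ v) (hv : 2 ≤ l.count v) : ∃ l₀, l = l₀ ++ [v] := by
  rcases eq_nil_or_concat l with rfl | ⟨l₀, z, rfl⟩
  · simp at hv
  rw [concat_eq_append] at *
  by_cases hz : z = v
  · exact ⟨l₀, by simp [hz]⟩
  have hvv : replicate 2 v <+ l₀ :=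
    replicate_sublist_iff.2 (by simpa [count_append, hz] using hv)
  exact (h v z (hmax z (by simp)) (hvv.append_right [z])).elim

theorem isGesselPerm_iff {n : ℕ} {l : List ℕ} :
    IsGesselPerm n l ↔ IsDoubleMultiset n l ∧ AvoidsPairThenLE l := by
  refine and_congr_right fun _ => ?_
  simp only [AvoidsPairThenLE, cons_cons_singleton_sublist_iff]
  constructor
  · rintro h x y hyx ⟨a, c, d, hac, hcd, ha, hc, hd⟩
    have hlt := h a c d hac (ha.trans hc.symm) hcd
    omega
  · intro h a c d hac heq hcd
    by_contra! hle
    exact h _ _ hle ⟨a, c, d, hac, hcd, heq, rfl, rfl⟩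

theorem isGesselPerm_insertPair {n : ℕ} {l : List ℕ} (h : IsGesselPerm n l) (p : ℕ) :
    IsGesselPerm (n + 1) (insertPair (n + 1) l p) := by
  obtain ⟨hd, ha⟩ := isGesselPerm_iff.1 h
  have hlt : ∀ x ∈ l, x < n + 1 := fun x hx => Nat.lt_succ_of_le (hd.le_of_mem hx)
  refine isGesselPerm_iff.2 ⟨fun i => ?_, avoidsPairThenLE_insertPair ha hlt p⟩
  rw [perm_insertPair.count_eq, count_cons, count_cons, hd i]
  simp only [beq_iff_eq]
  split_ifs <;> omega

theorem IsGesselPerm.exists_eq_insertPair {n : ℕ} {l : List ℕ} (h : IsGesselPerm (n + 1) l) :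
    ∃ l', IsGesselPerm n l' ∧ ∃ p ≤ l'.length, l = insertPair (n + 1) l' p := by
  obtain ⟨hd, ha⟩ := isGesselPerm_iff.1 h
  have hcount := hd (n + 1)
  rw [if_pos (by omega)] at hcount
  obtain ⟨l₀, rfl⟩ := ha.exists_eq_concat (fun x hx => hd.le_of_mem hx) hcount.ge
  obtain ⟨s, t, rfl, -, -⟩ := exists_eq_append_cons_of_count_eq_one (a := n + 1) (l := l₀)
    (by simpa [count_append] using hcount)
  have heq : s ++ (n + 1) :: t ++ [n + 1] = insertPair (n + 1) (s ++ t) s.length := by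
    simp [insertPair]
  refine ⟨s ++ t, isGesselPerm_iff.2 ⟨fun i => ?_, ha.sublist (by simp)⟩,
    s.length, by simp, heq⟩
  have hi := hd i
  rw [heq, perm_insertPair.count_eq, count_cons, count_cons] at hi
  simp only [beq_iff_eq] at hi
  split_ifs at hi ⊢ <;> omega

theorem IsGesselPerm.succ_notMem {n : ℕ} {l : List ℕ} (h : IsGesselPerm n l) : n + 1 ∉ l :=
  fun hn => by have := h.1.le_of_mem hn; omega

theorem isGesselPerm_zero_iff {l : List ℕ} : IsGesselPerm 0 l ↔ l = [] := by
  refine ⟨fun h => length_eq_zero_iff.1 h.1.length_eq, ?_⟩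
  rintro rfl
  exact ⟨fun i => by rw [count_nil, if_neg (by omega)], fun a => a.elim0⟩

theorem card_isGesselPerm_zero : Nat.card {l : List ℕ // IsGesselPerm 0 l} = 1 := by
  rw [Nat.card_congr (Equiv.subtypeEquivRight fun _ => isGesselPerm_zero_iff), Nat.card_unique]

theorem card_isGesselPerm_succ (n : ℕ) :
    Nat.card {l : List ℕ // IsGesselPerm (n + 1) l}
      = Nat.card {l : List ℕ // IsGesselPerm n l} * (2 * n + 1) := by
  let f : {l // IsGesselPerm n l} × Fin (2 * n + 1) → {l // IsGesselPerm (n + 1) l} :=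
    fun x => ⟨insertPair (n + 1) x.1 x.2, isGesselPerm_insertPair x.1.2 x.2⟩
  rw [← Nat.card_fin (2 * n + 1), ← Nat.card_prod]
  refine (Nat.card_eq_of_bijective f ⟨?_, ?_⟩).symm
  · rintro ⟨⟨l, hl⟩, p⟩ ⟨⟨l', hl'⟩, q⟩ h
    obtain ⟨rfl, hpq⟩ := insertPair_inj hl.succ_notMem hl'.succ_notMem
      (by rw [hl.1.length_eq]; omega) (by rw [hl'.1.length_eq]; omega) (congrArg Subtype.val h)
    exact Prod.ext rfl (Fin.ext hpq)
  · rintro ⟨l, hl⟩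
    obtain ⟨l', hl', p, hp, rfl⟩ := hl.exists_eq_insertPair
    exact ⟨(⟨l', hl'⟩, ⟨p, by rw [hl'.1.length_eq] at hp; omega⟩), rfl⟩

theorem stmt5_general (n : ℕ) :
    Nat.card {l : List ℕ // IsGesselPerm n l}
      = Nat.doubleFactorial (2 * n - 1) := by
  induction n with
  | zero => exact card_isGesselPerm_zero
  | succ n ih =>
    rw [card_isGesselPerm_succ, ih, show 2 * (n + 1) - 1 = 2 * n + 1 by omega,
      Nat.doubleFactorial_add_one, mul_comm]

theorem stmt5 (n : ℕ) (hn : 1 ≤ n) :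
    Nat.card {l : List ℕ // IsGesselPerm n l}
      = Nat.doubleFactorial (2 * n - 1) :=
  stmt5_general n
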